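/- For positive semidefinite matrices M and N of the same finite size, the trace norm of M − N is at most ‖√M − √N‖₂ · ‖√M + √N‖₂. -/

import Mathlib

open Matrix
open ComplexOrder
open scoped Classical

/-- positive semidefinite square root (junk value `0` off the PSD matrices) -/
noncomputable def msqrt {n : Type*} [Fintype n] [DecidableEq n] (A : Matrix n n ℂ) :
    Matrix n n ℂ :=
  if h : A.PosSemidef then (h.1.eigenvectorUnitary : Matrix n n ℂ) *
    diagonal ((↑) ∘ (√·) ∘ h.1.eigenvalues) * (star h.1.eigenvectorUnitary : Matrix n n ℂ) else 0

/-- matrix logarithm via the Hermitian functional calculus (junk value `0` otherwise) -/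
noncomputable def mlog {n : Type*} [Fintype n] [DecidableEq n] (A : Matrix n n ℂ) :
    Matrix n n ℂ :=
  if h : A.IsHermitian then h.cfc Real.log else 0

/-- matrix logarithm taken on the support (eigenvalue `0` is sent to `0`) -/
noncomputable def mlog0 {n : Type*} [Fintype n] [DecidableEq n] (A : Matrix n n ℂ) :
    Matrix n n ℂ :=
  if h : A.IsHermitian then h.cfc (fun x => if x = 0 then 0 else Real.log x) else 0

/-- matrix exponential -/
noncomputable def mexp {n : Type*} [Fintype n] [DecidableEq n] (A : Matrix n n ℂ) :
    Matrix n n ℂ :=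
  NormedSpace.exp A

/-- Frobenius (Hilbert–Schmidt) norm `‖X‖₂ = (Tr (Xᴴ X))^(1/2)` -/
noncomputable def frob {n : Type*} [Fintype n] [DecidableEq n] (X : Matrix n n ℂ) : ℝ :=
  Real.sqrt (Matrix.trace (Xᴴ * X)).re

/-- trace norm `‖X‖₁ = Tr √(Xᴴ X)` -/
noncomputable def trNorm {n : Type*} [Fintype n] [DecidableEq n] (X : Matrix n n ℂ) : ℝ :=
  (Matrix.trace (msqrt (Xᴴ * X))).re

/-- relative entropy `S(ρ‖σ) = Tr (ρ (log ρ − log σ))` -/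
noncomputable def relEnt {n : Type*} [Fintype n] [DecidableEq n]
    (rho sigma : Matrix n n ℂ) : ℝ :=
  (Matrix.trace (rho * (mlog rho - mlog sigma))).re

/-- relative entropy with logarithms taken on the support -/
noncomputable def relEnt0 {n : Type*} [Fintype n] [DecidableEq n]
    (rho sigma : Matrix n n ℂ) : ℝ :=
  (Matrix.trace (rho * (mlog0 rho - mlog0 sigma))).re

/-- von Neumann entropy `S(τ) = −Tr (τ log τ)` -/
noncomputable def vN {n : Type*} [Fintype n] [DecidableEq n] (rho : Matrix n n ℂ) : ℝ :=
  -(Matrix.trace (rho * mlog rho)).re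

section Tripartite

variable {α β γ : Type*} [Fintype α] [DecidableEq α] [Fintype β] [DecidableEq β]
  [Fintype γ] [DecidableEq γ]

/-- partial trace over the `B` system: `ρ_AC` -/
noncomputable def ptrB (M : Matrix (α × β × γ) (α × β × γ) ℂ) : Matrix (α × γ) (α × γ) ℂ :=
  fun p q => ∑ b : β, M (p.1, b, p.2) (q.1, b, q.2)

/-- partial trace over the `A` system: `ρ_BC` -/
noncomputable def ptrA (M : Matrix (α × β × γ) (α × β × γ) ℂ) : Matrix (β × γ) (β × γ) ℂ :=
  fun p q => ∑ a : α, M (a, p.1, p.2) (a, q.1, q.2)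

/-- partial trace over the `A` and `B` systems: `ρ_C` -/
noncomputable def ptrAB (M : Matrix (α × β × γ) (α × β × γ) ℂ) : Matrix γ γ ℂ :=
  fun c c' => ∑ a : α, ∑ b : β, M (a, b, c) (a, b, c')

/-- embedding `X_AC ↦ X_AC ⊗ I_B` -/
def embAC (X : Matrix (α × γ) (α × γ) ℂ) : Matrix (α × β × γ) (α × β × γ) ℂ :=
  fun p q => if p.2.1 = q.2.1 then X (p.1, p.2.2) (q.1, q.2.2) else 0

/-- embedding `X_BC ↦ I_A ⊗ X_BC` -/
def embBC (X : Matrix (β × γ) (β × γ) ℂ) : Matrix (α × β × γ) (α × β × γ) ℂ :=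
  fun p q => if p.1 = q.1 then X p.2 q.2 else 0

/-- embedding `X_C ↦ I_A ⊗ I_B ⊗ X_C` -/
def embC (X : Matrix γ γ ℂ) : Matrix (α × β × γ) (α × β × γ) ℂ :=
  fun p q => if p.1 = q.1 ∧ p.2.1 = q.2.1 then X p.2.2 q.2.2 else 0

/-- conditional mutual information `I(A:B|C)_ρ = S(ρ_AC)+S(ρ_BC)−S(ρ_ABC)−S(ρ_C)` -/
noncomputable def cmi (rho : Matrix (α × β × γ) (α × β × γ) ℂ) : ℝ :=
  vN (ptrB rho) + vN (ptrA rho) - vN rho - vN (ptrAB rho)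

/-- the operator `exp(log σ_AC + log σ_BC − log σ_C)` -/
noncomputable def sigOp (sigma : Matrix (α × β × γ) (α × β × γ) ℂ) :
    Matrix (α × β × γ) (α × β × γ) ℂ :=
  mexp (embAC (mlog (ptrB sigma)) + embBC (mlog (ptrA sigma)) - embC (mlog (ptrAB sigma)))

/-- the operator `exp(log ρ_AC + log ρ_BC)` -/
noncomputable def sigOp2 (sigma : Matrix (α × β × γ) (α × β × γ) ℂ) :
    Matrix (α × β × γ) (α × β × γ) ℂ :=
  mexp (embAC (mlog (ptrB sigma)) + embBC (mlog (ptrA sigma)))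

end Tripartite

/-! With `A = √M` and `B = √N`, `2 (M - N) = (A - B)(A + B) + (A + B)(A - B)`. The sign of the
Hermitian matrix `M - N` (taking `sign 0 = 1`) is a unitary `U` with `‖M - N‖₁ = Re Tr (U (M - N))`,
and `|Tr (U X Y)| ≤ ‖X‖₂ ‖Y‖₂` by Cauchy–Schwarz for the Hilbert–Schmidt inner product, since
left multiplication by `U` preserves `‖·‖₂`. -/

open WithLp

lemma trace_conjTranspose_mul_eq_inner_vec {n : Type*} [Fintype n] (X Y : Matrix n n ℂ) :
    trace (Xᴴ * Y) = inner ℂ (toLp 2 X.vec) (toLp 2 Y.vec) := by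
  rw [EuclideanSpace.inner_toLp_toLp, dotProduct_comm, star_vec_dotProduct_vec]

section

variable {n : Type*} [Fintype n] [DecidableEq n]

lemma frob_eq_norm_vec (X : Matrix n n ℂ) : frob X = ‖toLp 2 X.vec‖ := by
  rw [frob, norm_eq_sqrt_re_inner (𝕜 := ℂ), trace_conjTranspose_mul_eq_inner_vec]
  rfl

lemma norm_trace_conjTranspose_mul_le (X Y : Matrix n n ℂ) :
    ‖trace (Xᴴ * Y)‖ ≤ frob X * frob Y := by
  rw [trace_conjTranspose_mul_eq_inner_vec, frob_eq_norm_vec, frob_eq_norm_vec]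
  exact norm_inner_le_norm _ _

lemma frob_conjTranspose (X : Matrix n n ℂ) : frob Xᴴ = frob X := by
  rw [frob, frob, conjTranspose_conjTranspose, trace_mul_comm]

lemma frob_unitary_mul {U : Matrix n n ℂ} (hU : U ∈ unitaryGroup n ℂ) (X : Matrix n n ℂ) :
    frob (U * X) = frob X := by
  have hUU : Uᴴ * U = 1 := Unitary.star_mul_self_of_mem hU
  rw [frob, frob, conjTranspose_mul, mul_assoc, ← mul_assoc Uᴴ, hUU, one_mul]

lemma norm_trace_unitary_mul_mul_le {U : Matrix n n ℂ} (hU : U ∈ unitaryGroup n ℂ)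
    (X Y : Matrix n n ℂ) : ‖trace (U * X * Y)‖ ≤ frob X * frob Y :=
  calc ‖trace (U * X * Y)‖ = ‖trace (Yᴴᴴ * (U * X))‖ := by
        rw [conjTranspose_conjTranspose, trace_mul_comm]
    _ ≤ frob Yᴴ * frob (U * X) := norm_trace_conjTranspose_mul_le _ _
    _ = frob X * frob Y := by rw [frob_conjTranspose, frob_unitary_mul hU, mul_comm]

lemma Matrix.PosSemidef.msqrt_eq_cfc {M : Matrix n n ℂ} (hM : M.PosSemidef) :
    msqrt M = cfc Real.sqrt M := by
  rw [msqrt, dif_pos hM, hM.1.cfc_eq, IsHermitian.cfc, Unitary.conjStarAlgAut_apply]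
  rfl

lemma Matrix.PosSemidef.msqrt_mul_self {M : Matrix n n ℂ} (hM : M.PosSemidef) :
    msqrt M * msqrt M = M := by
  calc msqrt M * msqrt M = cfc (fun x => √x * √x) M := by
        rw [hM.msqrt_eq_cfc, cfc_mul Real.sqrt Real.sqrt M]
    _ = cfc (fun x : ℝ => x) M := cfc_congr fun x hx => by
        obtain ⟨i, rfl⟩ := hM.1.spectrum_real_eq_range_eigenvalues ▸ hx
        exact Real.mul_self_sqrt (hM.eigenvalues_nonneg i)
    _ = M := cfc_id' ℝ M hM.1

lemma Matrix.IsHermitian.msqrt_conjTranspose_mul_self {D : Matrix n n ℂ} (hD : D.IsHermitian) :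
    msqrt (Dᴴ * D) = cfc (fun x : ℝ => |x|) D := by
  have hDD : Dᴴ * D = cfc (fun x : ℝ => x * x) D := by
    rw [cfc_mul (fun x : ℝ => x) (fun x : ℝ => x) D, cfc_id' ℝ D, hD.eq]
  rw [(posSemidef_conjTranspose_mul_self D).msqrt_eq_cfc, hDD, ← cfc_comp Real.sqrt _ D]
  exact cfc_congr fun x _ => Real.sqrt_mul_self_eq_abs x

lemma Matrix.IsHermitian.exists_unitary_trNorm_eq {D : Matrix n n ℂ} (hD : D.IsHermitian) :
    ∃ U ∈ unitaryGroup n ℂ, trNorm D = (trace (U * D)).re := by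
  let sign : ℝ → ℝ := fun x => if x < 0 then -1 else 1
  have hsign : ContinuousOn sign (spectrum ℝ D) := D.finite_real_spectrum.continuousOn _
  refine ⟨cfc sign D, (cfc_unitary_iff sign D).2 fun x _ => ?_, ?_⟩
  · by_cases h : x < 0 <;> simp [sign, h]
  · rw [trNorm, hD.msqrt_conjTranspose_mul_self]
    congr 2
    calc cfc (fun x : ℝ => |x|) D = cfc (fun x => sign x * x) D := cfc_congr fun x _ => by
          by_cases h : x < 0
          · simp [sign, h, abs_of_neg h]
          · simp [sign, h, abs_of_nonneg (not_lt.mp h)]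
      _ = cfc sign D * cfc (fun x : ℝ => x) D := cfc_mul ..
      _ = cfc sign D * D := by rw [cfc_id' ℝ D]

end

theorem trace_norm_le_frob_mul_frob {n : Type*} [Fintype n] [DecidableEq n]
    (M N : Matrix n n ℂ) (hM : M.PosSemidef) (hN : N.PosSemidef) :
    trNorm (M - N) ≤ frob (msqrt M - msqrt N) * frob (msqrt M + msqrt N) := by
  set A := msqrt M
  set B := msqrt N
  obtain ⟨U, hU, htr⟩ := (hM.1.sub hN.1).exists_unitary_trNorm_eq
  have hsplit : (M - N) + (M - N) = (A - B) * (A + B) + (A + B) * (A - B) := by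
    rw [← hM.msqrt_mul_self, ← hN.msqrt_mul_self]
    noncomm_ring
  have htwice : 2 * trNorm (M - N) =
      (trace (U * (A - B) * (A + B))).re + (trace (U * (A + B) * (A - B))).re := by
    rw [two_mul, htr, ← Complex.add_re, ← trace_add, ← mul_add, hsplit, mul_add, trace_add,
      ← mul_assoc, ← mul_assoc, Complex.add_re]
  have h₁ := (Complex.re_le_norm _).trans (norm_trace_unitary_mul_mul_le hU (A - B) (A + B))
  have h₂ := (Complex.re_le_norm _).trans (norm_trace_unitary_mul_mul_le hU (A + B) (A - B))
  linarith
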